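/- arXiv:1110.6788 — 4 statements merged into one kernel-verified Lean document; each statement's English description precedes it below -/
import Mathlib

section
/- Let G be a commutative group in which the equation x² = ω has at most two solutions, let ω ∈ G, and let S be a multiset of 2n elements of G such that the product of all elements of S equals ωⁿ and S is invariant under the involution x ↦ ω·x⁻¹. Then S can be enumerated as μ₁,…,μ₂ₙ such that μᵢ · μ₂ₙ₊₁₋ᵢ = ω for every i = 1,…,2n. -/
private lemma key_pairing {G : Type*} [CommGroup G] (ω : G)
    (hsq : ∀ a b c : G, a ^ 2 = ω → b ^ 2 = ω → c ^ 2 = ω → a = b ∨ a = c ∨ b = c) :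
    ∀ (n : ℕ) (S : Multiset G), Multiset.card S = 2 * n → S.prod = ω ^ n →
      Multiset.map (fun x => ω * x⁻¹) S = S →
      ∃ L : List G, (L : Multiset G) = S ∧ L.length = 2 * n ∧
        ∀ i j (hi : i < L.length) (hj : j < L.length), i + j + 1 = 2 * n → L[i] * L[j] = ω := by
  classical
  intro n
  induction n with
  | zero =>
    intro S hcard _ _
    refine ⟨[], ?_, rfl, ?_⟩
    · have : S = 0 := Multiset.card_eq_zero.mp (by omega)
      simp [this]
    · intro i j hi hj _; simp at hi
  | succ n ih =>
    intro S hcard hprod hinv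
    set σ : G → G := fun x => ω * x⁻¹ with hσ
    have hinj : Function.Injective σ := fun a b h => by
      simpa using inv_injective (mul_left_cancel h)
    -- find x ∈ S with σ x ∈ S.erase x
    have hex : ∃ x, x ∈ S ∧ σ x ∈ S.erase x := by
      by_cases hfix : ∃ x ∈ S, σ x ≠ x
      · obtain ⟨x, hxS, hne⟩ := hfix
        refine ⟨x, hxS, ?_⟩
        have hcnt : S.count (σ x) = S.count x := by
          conv_lhs => rw [← hinv]
          exact Multiset.count_map_eq_count' σ S hinj x
        have : 0 < (S.erase x).count (σ x) := by
          rw [Multiset.count_erase_of_ne hne, hcnt]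
          exact Multiset.count_pos.mpr hxS
        exact Multiset.count_pos.mp this
      · push_neg at hfix
        by_cases hd : S.Nodup
        · exfalso
          have hsquare : ∀ x ∈ S, x ^ 2 = ω := by
            intro x hx
            have h := hfix x hx
            simp only [hσ] at h
            rw [sq]; exact (mul_inv_eq_iff_eq_mul.mp h).symm
          have h2 : 0 < Multiset.card S := by omega
          obtain ⟨a, ha⟩ := Multiset.card_pos_iff_exists_mem.mp h2
          obtain ⟨T, rfl⟩ := Multiset.exists_cons_of_mem ha
          have hT : 0 < Multiset.card T := by simp at hcard; omega
          obtain ⟨b, hb⟩ := Multiset.card_pos_iff_exists_mem.mp hT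
          obtain ⟨U, rfl⟩ := Multiset.exists_cons_of_mem hb
          simp only [Multiset.card_cons] at hcard
          rcases Nat.eq_zero_or_pos n with hn | hn
          · subst hn
            have hU : U = 0 := Multiset.card_eq_zero.mp (by omega)
            subst hU
            have hab : a * b = ω := by simpa using hprod
            have ha2 : a ^ 2 = ω := hsquare a (by simp)
            have : a = b := mul_left_cancel (a := a) (by rw [hab, ← ha2, sq])
            simp [Multiset.nodup_cons, this] at hd
          · have hU : 0 < Multiset.card U := by omega
            obtain ⟨c, hc⟩ := Multiset.card_pos_iff_exists_mem.mp hU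
            simp only [Multiset.nodup_cons, Multiset.mem_cons] at hd
            have hab : a ≠ b := fun h => hd.1 (Or.inl h)
            have hac : a ≠ c := fun h => hd.1 (Or.inr (h ▸ hc))
            have hbc : b ≠ c := fun h => hd.2.1 (h ▸ hc)
            have := hsq a b c (hsquare a (by simp)) (hsquare b (by simp))
              (hsquare c (by simp [Multiset.mem_cons_of_mem, hc]))
            tauto
        · rw [Multiset.nodup_iff_count_le_one] at hd
          push_neg at hd
          obtain ⟨x, hx2⟩ := hd
          have hxS : x ∈ S := Multiset.count_pos.mp (by omega)
          refine ⟨x, hxS, ?_⟩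
          rw [hfix x hxS]
          have : 0 < (S.erase x).count x := by
            rw [Multiset.count_erase_self]; omega
          exact Multiset.count_pos.mp this
    obtain ⟨x, hxS, hσxS⟩ := hex
    set S' : Multiset G := (S.erase x).erase (σ x) with hS'def
    have hS : S = x ::ₘ σ x ::ₘ S' := by
      rw [hS'def, Multiset.cons_erase hσxS, Multiset.cons_erase hxS]
    have hxσx : x * σ x = ω := by simp [hσ]
    have hσσ : σ (σ x) = x := by simp [hσ]
    have hcard' : Multiset.card S' = 2 * n := by
      rw [hS] at hcard; simp at hcard; omega
    have hprod' : S'.prod = ω ^ n := by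
      rw [hS] at hprod
      simp only [Multiset.prod_cons] at hprod
      rw [← mul_assoc, hxσx, pow_succ, mul_comm (ω ^ n) ω] at hprod
      exact mul_left_cancel hprod
    have hinv' : Multiset.map σ S' = S' := by
      have h1 : Multiset.map σ S = σ x ::ₘ x ::ₘ Multiset.map σ S' := by
        rw [hS]; simp [hσσ]
      rw [hinv, hS, Multiset.cons_swap] at h1
      exact ((Multiset.cons_inj_right _).mp ((Multiset.cons_inj_right _).mp h1)).symm
    obtain ⟨M, hM, hMlen, hMpair⟩ := ih S' hcard' hprod' hinv'
    have hlast : ∀ (h : 2 * n + 1 < (x :: (M ++ [σ x])).length),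
        (x :: (M ++ [σ x]))[2 * n + 1] = σ x := by
      intro h
      rw [List.getElem_cons_succ, List.getElem_append_right (by omega)]
      simp [hMlen]
    refine ⟨x :: (M ++ [σ x]), ?_, by simp [hMlen]; ring, ?_⟩
    · rw [← Multiset.cons_coe, ← Multiset.coe_add, hM, add_comm,
        show ((↑[σ x] : Multiset G)) = {σ x} from rfl, Multiset.singleton_add, hS]
    · intro i j hi hj hij
      have hLlen : (x :: (M ++ [σ x])).length = 2 * n + 2 := by simp [hMlen]
      rw [hLlen] at hi hj
      match i, j with
      | 0, j =>
        have hj' : j = 2 * n + 1 := by omega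
        subst hj'
        rw [List.getElem_cons_zero, hlast _, hxσx]
      | (i+1), 0 =>
        have hi' : i = 2 * n := by omega
        subst hi'
        rw [List.getElem_cons_zero, hlast _, mul_comm, hxσx]
      | (i+1), (j+1) =>
        have hi2 : i < M.length := by omega
        have hj2 : j < M.length := by omega
        rw [List.getElem_cons_succ, List.getElem_cons_succ,
          List.getElem_append_left hi2, List.getElem_append_left hj2]
        exact hMpair i j hi2 hj2 (by omega)

theorem stmt_1 {G : Type*} [CommGroup G] (n : ℕ) (ω : G)
    (hsq : ∀ a b c : G, a ^ 2 = ω → b ^ 2 = ω → c ^ 2 = ω → a = b ∨ a = c ∨ b = c)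
    (S : Multiset G) (hcard : Multiset.card S = 2 * n)
    (hprod : S.prod = ω ^ n)
    (hinv : Multiset.map (fun x => ω * x⁻¹) S = S) :
    ∃ μ : Fin (2 * n) → G, (List.ofFn μ : Multiset G) = S ∧
      ∀ i : Fin (2 * n), μ i * μ i.rev = ω := by
  obtain ⟨L, hL, hlen, hpair⟩ := key_pairing ω hsq n S hcard hprod hinv
  refine ⟨fun i => L[(i : ℕ)]'(by omega), ?_, ?_⟩
  · rw [show List.ofFn (fun i : Fin (2*n) => L[(i : ℕ)]'(by omega)) = L from ?_, hL]
    apply List.ext_getElem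
    · simp [hlen]
    · intro i h1 h2
      simp
  · intro i
    have hiv : (i.rev : ℕ) = 2 * n - (i + 1) := Fin.val_rev i
    exact hpair i i.rev (by omega) (by omega) (by have := i.isLt; omega)
end

section
/- Let n ≥ 1 and n ≤ ℓ < 2n. There is no permutation w of {1, 2, …, 4n} satisfying all of the following: (1) w(4n+1−i) = 4n+1−w(i) for all i; (2) w⁻¹(2i) > w⁻¹(2i−1) for all i = 1,…,2n; (3) w(1) > w(2) > ⋯ > w(ℓ); (4) there exists an index i₀ with ℓ+1 ≤ i₀ ≤ 2n such that w(ℓ) > w(i₀) and w(ℓ) > w(4n+1−i₀). -/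
theorem stmt_2 (n ℓ : ℕ) (hn : 1 ≤ n) (hℓ₁ : n ≤ ℓ) (hℓ₂ : ℓ < 2 * n) :
    ¬ ∃ w : Equiv.Perm (Fin (4 * n)),
      (∀ i : Fin (4 * n), w i.rev = (w i).rev) ∧
      (∀ j : ℕ, ∀ hj : j < 2 * n,
        (w.symm ⟨2 * j, by omega⟩).val < (w.symm ⟨2 * j + 1, by omega⟩).val) ∧
      (∀ i j : ℕ, ∀ hij : i < j, ∀ hj : j < ℓ,
        (w ⟨j, by omega⟩).val < (w ⟨i, by omega⟩).val) ∧
      (∃ k : ℕ, ∃ hk₁ : ℓ ≤ k, ∃ hk₂ : k < 2 * n,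
        (w ⟨k, by omega⟩).val < (w ⟨ℓ - 1, by omega⟩).val ∧
        (w (⟨k, by omega⟩ : Fin (4 * n)).rev).val < (w ⟨ℓ - 1, by omega⟩).val) := by
  rintro ⟨w, h1, h2, h3, k, hk1, hk2, hwk, hwrk⟩
  have hml : ℓ - 1 < 4 * n := by omega
  have hk4 : k < 4 * n := by omega
  have hm4 : (w ⟨ℓ - 1, hml⟩).val < 4 * n := (w ⟨ℓ - 1, hml⟩).isLt
  have hwk4 : (w ⟨k, hk4⟩).val < 4 * n := (w ⟨k, hk4⟩).isLt
  have hwk' : (w ⟨k, hk4⟩).val < (w ⟨ℓ - 1, hml⟩).val := hwk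
  have hrev : (w (⟨k, hk4⟩ : Fin (4 * n)).rev).val = 4 * n - 1 - (w ⟨k, hk4⟩).val := by
    rw [h1, Fin.val_rev]
    omega
  have hwrk2 : (w (⟨k, hk4⟩ : Fin (4 * n)).rev).val < (w ⟨ℓ - 1, hml⟩).val := hwrk
  rw [hrev] at hwrk2
  have hmge : 2 * n + 1 ≤ (w ⟨ℓ - 1, hml⟩).val := by omega
  -- every value in the decreasing run is ≥ m
  have hrun : ∀ i, i < ℓ → ∀ hi : i < 4 * n,
      (w ⟨ℓ - 1, hml⟩).val ≤ (w ⟨i, hi⟩).val := by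
    intro i hiℓ hi
    by_cases h : i = ℓ - 1
    · subst h; exact le_refl _
    · exact le_of_lt (h3 i (ℓ - 1) (by omega) (by omega))
  -- distinct run entries lie in distinct pairs
  have hpair : ∀ i j (hi : i < 4 * n) (hj : j < 4 * n), i < ℓ → j < ℓ → i < j →
      (w ⟨i, hi⟩).val / 2 ≠ (w ⟨j, hj⟩).val / 2 := by
    intro i j hi hj hiℓ hjℓ hij heq
    have hlt : (w ⟨j, hj⟩).val < (w ⟨i, hi⟩).val := h3 i j hij hjℓ
    set t := (w ⟨j, hj⟩).val / 2 with ht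
    have ha : (w ⟨i, hi⟩).val = 2 * t + 1 := by omega
    have hb : (w ⟨j, hj⟩).val = 2 * t := by omega
    have htlt : t < 2 * n := by
      have := (w ⟨j, hj⟩).isLt; omega
    have e1 : w.symm ⟨2 * t, by omega⟩ = ⟨j, hj⟩ := by
      rw [Equiv.symm_apply_eq]
      exact Fin.ext hb.symm
    have e2 : w.symm ⟨2 * t + 1, by omega⟩ = ⟨i, hi⟩ := by
      rw [Equiv.symm_apply_eq]
      exact Fin.ext ha.symm
    have h2t := h2 t htlt
    rw [e1, e2] at h2t
    simp at h2t
    omega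
  -- counting: ℓ ≤ 2n - m/2
  have hcount : ℓ ≤ 2 * n - (w ⟨ℓ - 1, hml⟩).val / 2 := by
    have hinj : Function.Injective (fun i : Fin ℓ =>
        (⟨(w ⟨i.val, i.2.trans_le (by omega)⟩).val / 2 - (w ⟨ℓ - 1, hml⟩).val / 2, by
          have hA := hrun i.val i.2 (i.2.trans_le (by omega))
          have hB := (w ⟨i.val, i.2.trans_le (by omega)⟩).isLt
          omega⟩ : Fin (2 * n - (w ⟨ℓ - 1, hml⟩).val / 2))) := by
      intro i j h
      have hval := congrArg Fin.val h
      simp only at hval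
      have hAi := hrun i.val i.2 (i.2.trans_le (by omega))
      have hAj := hrun j.val j.2 (j.2.trans_le (by omega))
      have heq : (w ⟨i.val, i.2.trans_le (by omega)⟩).val / 2
          = (w ⟨j.val, j.2.trans_le (by omega)⟩).val / 2 := by omega
      rcases lt_trichotomy i.val j.val with hlt | heq' | hlt
      · exact absurd heq (hpair i.val j.val _ _ i.2 j.2 hlt)
      · exact Fin.ext heq'
      · exact absurd heq.symm (hpair j.val i.val _ _ j.2 i.2 hlt)
    have := Fintype.card_le_of_injective _ hinj
    simpa using this
  have hm : (w ⟨ℓ - 1, hml⟩).val = 2 * n + 1 := by omega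
  have hℓn : ℓ = n := by omega
  -- w(k) is 2n-1 or 2n
  have hwkval : (w ⟨k, hk4⟩).val = 2 * n - 1 ∨ (w ⟨k, hk4⟩).val = 2 * n := by omega
  have e21 : w.symm ⟨2 * n + 1, by omega⟩ = ⟨ℓ - 1, hml⟩ := by
    rw [Equiv.symm_apply_eq]
    exact Fin.ext hm.symm
  have h2n := h2 n (by omega)
  rw [e21] at h2n
  simp at h2n
  rcases hwkval with hv | hv
  · -- w(rev k) = 2n
    have e20 : w.symm ⟨2 * n, by omega⟩ = (⟨k, hk4⟩ : Fin (4 * n)).rev := by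
      rw [Equiv.symm_apply_eq]
      apply Fin.ext
      simp only [Fin.val_mk]
      omega
    rw [e20] at h2n
    simp only [Fin.val_rev, Fin.val_mk] at h2n
    omega
  · -- w(k) = 2n
    have e20 : w.symm ⟨2 * n, by omega⟩ = ⟨k, hk4⟩ := by
      rw [Equiv.symm_apply_eq]
      exact Fin.ext hv.symm
    rw [e20] at h2n
    simp at h2n
    omega
end

section
/- Let n ≥ 1 and ℓ > n with ℓ ≤ 2n. There is no permutation w of {1, 2, …, 4n+1} satisfying all of the following: (1) w(4n+2−i) = 4n+2−w(i) for all i; (2) w⁻¹(2i) > w⁻¹(2i−1) for all i = 1,…,2n; (3) whenever ℓ < i < j < 4n+2−ℓ one has w(i) < w(j); (4) w(1) > w(2) > ⋯ > w(ℓ); (5) there exists an index i₀ with ℓ+1 ≤ i₀ ≤ 2n such that w(ℓ) > w(i₀) and w(ℓ) > w(4n+2−i₀). -/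
theorem stmt_3 (n ℓ : ℕ) (hn : 1 ≤ n) (hℓ₁ : n < ℓ) (hℓ₂ : ℓ ≤ 2 * n) :
    ¬ ∃ w : Equiv.Perm (Fin (4 * n + 1)),
      (∀ i : Fin (4 * n + 1), w i.rev = (w i).rev) ∧
      (∀ j : ℕ, ∀ hj : j < 2 * n,
        (w.symm ⟨2 * j, by omega⟩).val < (w.symm ⟨2 * j + 1, by omega⟩).val) ∧
      (∀ i j : ℕ, ∀ ha : ℓ ≤ i, ∀ hb : i < j, ∀ hc : j < 4 * n + 1 - ℓ,
        (w ⟨i, by omega⟩).val < (w ⟨j, by omega⟩).val) ∧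
      (∀ i j : ℕ, ∀ hij : i < j, ∀ hj : j < ℓ,
        (w ⟨j, by omega⟩).val < (w ⟨i, by omega⟩).val) ∧
      (∃ k : ℕ, ∃ hk₁ : ℓ ≤ k, ∃ hk₂ : k < 2 * n,
        (w ⟨k, by omega⟩).val < (w ⟨ℓ - 1, by omega⟩).val ∧
        (w (⟨k, by omega⟩ : Fin (4 * n + 1)).rev).val < (w ⟨ℓ - 1, by omega⟩).val) := by
  rintro ⟨w, h1, h2, h3, h4, k, hk1, hk2, hk5, hk6⟩
  -- abstract w into a ℕ-valued function
  obtain ⟨W, hW⟩ : ∃ W : ℕ → ℕ, ∀ (i : ℕ) (h : i < 4*n+1), (w ⟨i, h⟩).val = W i :=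
    ⟨fun i => if h : i < 4*n+1 then (w ⟨i, h⟩).val else 0, by
      intro i h; dsimp only; rw [dif_pos h]⟩
  have hWb : ∀ (i : ℕ), i < 4*n+1 → W i < 4*n+1 := by
    intro i h; rw [← hW i h]; exact (w ⟨i, h⟩).isLt
  have hrevmk : ∀ (i : ℕ) (h : i < 4*n+1),
      (⟨i, h⟩ : Fin (4*n+1)).rev = ⟨4*n - i, by omega⟩ := by
    intro i h
    apply Fin.ext
    rw [Fin.val_rev]
    show 4*n+1 - (i+1) = 4*n - i
    omega
  have hsym : ∀ (i : ℕ), i ≤ 4*n → W (4*n - i) = 4*n - W i := by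
    intro i h
    have hi : i < 4*n+1 := by omega
    have e := h1 ⟨i, hi⟩
    rw [hrevmk i hi] at e
    have e2 := congrArg Fin.val e
    rw [Fin.val_rev] at e2
    rw [hW (4*n - i) (by omega)] at e2
    have e3 : (w ⟨i, hi⟩).val = W i := hW i hi
    have := hWb i hi
    omega
  have hmid : W (2*n) = 2*n := by
    have h := hsym (2*n) (by omega)
    rw [show 4*n - 2*n = 2*n from by omega] at h
    have := hWb (2*n) (by omega)
    omega
  have h3' : ∀ i j : ℕ, ℓ ≤ i → i < j → j < 4*n+1-ℓ → W i < W j := by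
    intro i j ha hb hc
    have := h3 i j ha hb hc
    simp only [hW] at this
    exact this
  have h4' : ∀ i j : ℕ, i < j → j < ℓ → W j < W i := by
    intro i j hij hj
    have := h4 i j hij hj
    simp only [hW] at this
    exact this
  -- w(ℓ-1) ≥ 2n+1
  rw [hrevmk k (by omega)] at hk6
  simp only [hW] at hk5 hk6
  have hbig0 : 2*n+1 ≤ W (ℓ-1) := by
    have e := hsym k (by omega)
    have := hWb k (by omega)
    omega
  have hbig : ∀ i : ℕ, i < ℓ → 2*n+1 ≤ W i := by
    intro i hi
    by_cases h : i = ℓ - 1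
    · rw [h]; exact hbig0
    · have := h4' i (ℓ-1) (by omega) (by omega)
      omega
  -- preimages of even / odd values
  obtain ⟨P, hPval⟩ : ∃ P : ℕ → ℕ, ∀ (j : ℕ) (h : 2*j < 4*n+1), (w.symm ⟨2*j, h⟩).val = P j :=
    ⟨fun j => if h : 2*j < 4*n+1 then (w.symm ⟨2*j, h⟩).val else 0, by
      intro j h; dsimp only; rw [dif_pos h]⟩
  obtain ⟨Q, hQval⟩ : ∃ Q : ℕ → ℕ, ∀ (j : ℕ) (h : 2*j+1 < 4*n+1), (w.symm ⟨2*j+1, h⟩).val = Q j :=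
    ⟨fun j => if h : 2*j+1 < 4*n+1 then (w.symm ⟨2*j+1, h⟩).val else 0, by
      intro j h; dsimp only; rw [dif_pos h]⟩
  have hPlt : ∀ j : ℕ, 2*j < 4*n+1 → P j < 4*n+1 := by
    intro j h; rw [← hPval j h]; exact (w.symm _).isLt
  have hQlt : ∀ j : ℕ, 2*j+1 < 4*n+1 → Q j < 4*n+1 := by
    intro j h; rw [← hQval j h]; exact (w.symm _).isLt
  have hWP : ∀ (j : ℕ), 2*j < 4*n+1 → W (P j) = 2*j := by
    intro j h
    have hp := hPlt j h
    rw [← hW _ hp]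
    have e : (⟨P j, hp⟩ : Fin (4*n+1)) = w.symm ⟨2*j, h⟩ := Fin.ext ((hPval j h).symm)
    rw [e, Equiv.apply_symm_apply]
  have hWQ : ∀ (j : ℕ), 2*j+1 < 4*n+1 → W (Q j) = 2*j+1 := by
    intro j h
    have hq := hQlt j h
    rw [← hW _ hq]
    have e : (⟨Q j, hq⟩ : Fin (4*n+1)) = w.symm ⟨2*j+1, h⟩ := Fin.ext ((hQval j h).symm)
    rw [e, Equiv.apply_symm_apply]
  have hPQ : ∀ j : ℕ, j < 2*n → P j < Q j := by
    intro j hj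
    have := h2 j hj
    simp only [hPval, hQval] at this
    exact this
  -- the key claim: preimage of any even value 2j (j < n) lies in [ℓ, 2n)
  have hclaim : ∀ j : ℕ, j < n → ℓ ≤ P j ∧ P j < 2*n := by
    intro j hj
    have h2j : 2*j < 4*n+1 := by omega
    have hp := hWP j h2j
    have hplt := hPlt j h2j
    have c1 : ¬ P j < ℓ := by
      intro h
      have := hbig (P j) h
      omega
    have c2 : P j ≠ 2*n := by
      intro h
      rw [h] at hp
      omega
    have c3 : ¬ (2*n < P j ∧ P j < 4*n+1-ℓ) := by
      rintro ⟨ha', hb'⟩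
      have := h3' (2*n) (P j) (by omega) ha' hb'
      omega
    have c4 : ¬ (4*n - ℓ < P j) := by
      intro hball
      have hq := hWQ j (by omega)
      have hqlt := hQlt j (by omega)
      have hpq := hPQ j (by omega)
      have e1 := hsym (4*n - P j) (by omega)
      have e2 := hsym (4*n - Q j) (by omega)
      rw [show 4*n - (4*n - P j) = P j from by omega] at e1
      rw [show 4*n - (4*n - Q j) = Q j from by omega] at e2
      have hd := h4' (4*n - Q j) (4*n - P j) (by omega) (by omega)
      have hb1 := hWb (4*n - P j) (by omega)
      have hb2 := hWb (4*n - Q j) (by omega)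
      omega
    omega
  -- pigeonhole: n even values must fit in an interval of size 2n - ℓ < n
  have hmaps : ∀ j ∈ Finset.range n, P j ∈ Finset.Ico ℓ (2*n) := by
    intro j hj
    simp only [Finset.mem_range] at hj
    simp only [Finset.mem_Ico]
    exact hclaim j hj
  have hinj : Set.InjOn P (Finset.range n) := by
    intro a ha' b hb' hab
    simp only [Finset.coe_range, Set.mem_Iio] at ha' hb'
    have e1 := hWP a (by omega)
    have e2 := hWP b (by omega)
    rw [hab] at e1
    omega
  have hcard : (Finset.range n).card ≤ (Finset.Ico ℓ (2*n)).card :=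
    Finset.card_le_card_of_injOn P hmaps hinj
  rw [Finset.card_range, Nat.card_Ico] at hcard
  omega
end

section
/- Let n ≥ 2 and let ε = (ε₁, …, ε_{n−1}) ∈ {±1}^{n−1} with exactly one or exactly two coordinates equal to −1, and extend it by ε_n = ∏_{i=1}^{n−1} ε_i. Regard ε as the permutation p_ε of {1, …, 2n} with p_ε(i) = i if ε_i = 1 and p_ε(i) = 2n+1−i if ε_i = −1 (for 1 ≤ i ≤ n, and determined on the rest by p_ε(2n+1−i) = 2n+1−p_ε(i)). Then p_ε is conjugate, inside the group of permutations of {1,…,2n} commuting with i ↦ 2n+1−i, to the permutation p_{ε⁰} where ε⁰ has ε⁰_{n−1} = −1 (hence also ε⁰_n = −1) and all other coordinates +1, by an element of the subgroup of permutations of the form σ ⊕ σ̌ with σ ∈ S_n acting on {1,…,n}. -/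
theorem stmt_17 (n : ℕ) (hn : 2 ≤ n) (ε : Fin n → ℤ)
    (hpm : ∀ i, ε i = 1 ∨ ε i = -1)
    (hlast : ε ⟨n - 1, by omega⟩ =
      ∏ i ∈ Finset.univ.filter (fun i : Fin n => i.val < n - 1), ε i)
    (hcount :
      (Finset.univ.filter (fun i : Fin n => i.val < n - 1 ∧ ε i = -1)).card = 1 ∨
      (Finset.univ.filter (fun i : Fin n => i.val < n - 1 ∧ ε i = -1)).card = 2)
    (w w₀ : Equiv.Perm (Fin (2 * n)))
    (hw : ∀ i : Fin (2 * n), w i.rev = (w i).rev)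
    (hw' : ∀ i : Fin (2 * n), ∀ h : i.val < n,
      w i = if ε ⟨i.val, h⟩ = 1 then i else i.rev)
    (hw₀ : ∀ i : Fin (2 * n), w₀ i.rev = (w₀ i).rev)
    (hw₀' : ∀ i : Fin (2 * n), i.val < n →
      w₀ i = if i.val = n - 2 ∨ i.val = n - 1 then i.rev else i) :
    ∃ σ : Equiv.Perm (Fin (2 * n)),
      (∀ i, σ i.rev = (σ i).rev) ∧
      (∀ i : Fin (2 * n), i.val < n → (σ i).val < n) ∧
      σ * w * σ⁻¹ = w₀ := by
  classical
  -- the set of minus signs has cardinality 2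
  set p : Fin n → Prop := fun i => ε i = -1 with hp
  set q : Fin n → Prop := fun i => i.val = n - 2 ∨ i.val = n - 1 with hq
  have hA : ∀ s : Finset (Fin n), (∀ i ∈ s, ε i = -1) → ∏ i ∈ s, ε i = (-1) ^ s.card := by
    intro s hs
    rw [Finset.prod_congr rfl hs, Finset.prod_const]
  have hprod : ∏ i ∈ Finset.univ.filter (fun i : Fin n => i.val < n - 1), ε i =
      (-1) ^ (Finset.univ.filter (fun i : Fin n => i.val < n - 1 ∧ ε i = -1)).card := by
    rw [← Finset.prod_filter_mul_prod_filter_not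
      (Finset.univ.filter (fun i : Fin n => i.val < n - 1)) (fun i => ε i = -1)]
    rw [Finset.filter_filter, Finset.filter_filter]
    rw [hA _ (fun i hi => (Finset.mem_filter.mp hi).2.2)]
    have : ∏ i ∈ Finset.univ.filter (fun i : Fin n => i.val < n - 1 ∧ ¬ε i = -1), ε i = 1 := by
      apply Finset.prod_eq_one
      intro i hi
      rcases hpm i with h | h
      · exact h
      · exact absurd h (Finset.mem_filter.mp hi).2.2
    rw [this, mul_one]
  have hcard2 : (Finset.univ.filter (fun i : Fin n => p i)).card = 2 := by
    have hsplit : (Finset.univ.filter (fun i : Fin n => p i)).card =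
        ((Finset.univ.filter (fun i : Fin n => p i)).filter (fun i => i.val < n - 1)).card +
        ((Finset.univ.filter (fun i : Fin n => p i)).filter (fun i => ¬ i.val < n - 1)).card := by
      rw [Finset.card_filter_add_card_filter_not]
    have h1 : ((Finset.univ.filter (fun i : Fin n => p i)).filter (fun i => i.val < n - 1)) =
        Finset.univ.filter (fun i : Fin n => i.val < n - 1 ∧ ε i = -1) := by
      rw [Finset.filter_filter]
      apply Finset.filter_congr
      intro i _
      simp [hp, and_comm]
    have h2 : ((Finset.univ.filter (fun i : Fin n => p i)).filter (fun i => ¬ i.val < n - 1)) =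
        if ε ⟨n - 1, by omega⟩ = -1 then {(⟨n - 1, by omega⟩ : Fin n)} else ∅ := by
      ext i
      simp only [Finset.mem_filter, Finset.mem_univ, true_and, hp]
      constructor
      · rintro ⟨hε, hge⟩
        have hiv : i.val = n - 1 := by have := i.isLt; omega
        have hieq : i = ⟨n - 1, by omega⟩ := Fin.ext hiv
        rw [hieq] at hε
        rw [if_pos hε, Finset.mem_singleton]
        exact hieq
      · intro hi
        split_ifs at hi with hyp
        · rw [Finset.mem_singleton] at hi
          rw [hi]
          exact ⟨hyp, by simp⟩
        · simp at hi
    rcases hcount with hc | hc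
    · have hl : ε ⟨n - 1, by omega⟩ = -1 := by rw [hlast, hprod, hc]; ring
      rw [hsplit, h1, h2, hc, if_pos hl]
      simp
    · have hl : ε ⟨n - 1, by omega⟩ = 1 := by rw [hlast, hprod, hc]; ring
      have hl' : ¬ ε ⟨n - 1, by omega⟩ = -1 := by rw [hl]; norm_num
      rw [hsplit, h1, h2, hc, if_neg hl']
      simp
  have hqcard : (Finset.univ.filter (fun i : Fin n => q i)).card = 2 := by
    have : (Finset.univ.filter (fun i : Fin n => q i)) =
        {(⟨n - 2, by omega⟩ : Fin n), (⟨n - 1, by omega⟩ : Fin n)} := by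
      ext i
      simp only [Finset.mem_filter, Finset.mem_univ, true_and, hq, Finset.mem_insert,
        Finset.mem_singleton]
      constructor
      · rintro (h | h)
        · left; apply Fin.ext; simpa using h
        · right; apply Fin.ext; simpa using h
      · rintro (h | h) <;> subst h <;> simp
    rw [this, Finset.card_insert_of_notMem, Finset.card_singleton]
    simp only [Finset.mem_singleton]
    intro h
    have := congrArg Fin.val h
    simp at this
    omega
  -- get a permutation of Fin n sending p to q
  have hce : Fintype.card {i : Fin n // p i} = Fintype.card {i : Fin n // q i} := by
    rw [Fintype.card_subtype, Fintype.card_subtype, hcard2, hqcard]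
  let e : {i : Fin n // p i} ≃ {i : Fin n // q i} := Fintype.equivOfCardEq hce
  let τ : Equiv.Perm (Fin n) := e.extendSubtype
  have hτ : ∀ i : Fin n, p i ↔ q (τ i) := by
    intro i
    constructor
    · exact e.extendSubtype_mem i
    · intro h
      by_contra hpi
      exact e.extendSubtype_not_mem i hpi h
  -- lift τ to Fin (2*n)
  have hn1 : 1 ≤ n := by omega
  set F : Fin (2 * n) → Fin (2 * n) := fun i =>
    if h : i.val < n then ⟨(τ ⟨i.val, h⟩).val, by have := (τ ⟨i.val, h⟩).isLt; omega⟩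
    else (⟨(τ ⟨2 * n - 1 - i.val, by omega⟩).val,
      by have := (τ ⟨2 * n - 1 - i.val, by omega⟩).isLt; omega⟩ : Fin (2 * n)).rev
    with hF
  have hFlt : ∀ i : Fin (2 * n), i.val < n → (F i).val < n := by
    intro i h
    simp only [hF, dif_pos h]
    exact (τ ⟨i.val, h⟩).isLt
  have hFge : ∀ i : Fin (2 * n), ¬ i.val < n → ¬ (F i).val < n := by
    intro i h
    simp only [hF, dif_neg h, Fin.val_rev]
    have := (τ ⟨2 * n - 1 - i.val, by omega⟩).isLt
    omega
  have hFinj : Function.Injective F := by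
    intro i j hij
    by_cases hi : i.val < n <;> by_cases hj : j.val < n
    · simp only [hF, dif_pos hi, dif_pos hj, Fin.mk.injEq] at hij
      have e3 := τ.injective (Fin.ext hij)
      rw [Fin.mk.injEq] at e3
      exact Fin.ext e3
    · exact absurd (hij ▸ hFlt i hi) (hFge j hj)
    · exact absurd (hij ▸ hFge i hi) (fun h => h (hFlt j hj))
    · simp only [hF, dif_neg hi, dif_neg hj, Fin.rev_inj] at hij
      rw [Fin.mk.injEq] at hij
      have e3 := τ.injective (Fin.ext hij)
      rw [Fin.mk.injEq] at e3
      have := i.isLt; have := j.isLt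
      exact Fin.ext (by omega)
  let σ : Equiv.Perm (Fin (2 * n)) :=
    Equiv.ofBijective F (Finite.injective_iff_bijective.mp hFinj)
  have hσ : ∀ i, σ i = F i := fun i => rfl
  have hσrev : ∀ i : Fin (2 * n), σ i.rev = (σ i).rev := by
    intro i
    rw [hσ, hσ]
    by_cases h : i.val < n
    · have hrev : ¬ (i.rev).val < n := by
        simp only [Fin.val_rev]; omega
      simp only [hF, dif_neg hrev, dif_pos h]
      rw [Fin.rev_inj]
      apply Fin.ext
      exact congrArg (fun x : Fin n => (τ x).val)
        (Fin.ext (by have := i.isLt; simp only [Fin.val_rev]; omega))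
    · have hrev : (i.rev).val < n := by
        have := i.isLt; simp only [Fin.val_rev]; omega
      simp only [hF, dif_pos hrev, dif_neg h, Fin.rev_rev]
      apply Fin.ext
      exact congrArg (fun x : Fin n => (τ x).val)
        (Fin.ext (by have := i.isLt; simp only [Fin.val_rev]; omega))
  refine ⟨σ, hσrev, fun i h => hFlt i h, ?_⟩
  rw [mul_inv_eq_iff_eq_mul]
  apply Equiv.ext
  intro i
  simp only [Equiv.Perm.coe_mul, Function.comp_apply]
  -- goal: σ (w i) = w₀ (σ i)
  suffices key : ∀ i : Fin (2 * n), i.val < n → σ (w i) = w₀ (σ i) by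
    by_cases h : i.val < n
    · exact key i h
    · have hrev : (i.rev).val < n := by have := i.isLt; simp only [Fin.val_rev]; omega
      have := key i.rev hrev
      rw [← Fin.rev_rev i, hw, hσrev, hσrev, hw₀, this]
  intro i h
  have hσi : (σ i).val < n := hFlt i h
  have hσiv : (σ i).val = (τ ⟨i.val, h⟩).val := by rw [hσ]; simp only [hF, dif_pos h]
  rw [hw' i h, hw₀' (σ i) hσi]
  rcases hpm ⟨i.val, h⟩ with hε | hε
  · rw [if_pos hε]
    have hnq : ¬ q (τ ⟨i.val, h⟩) := by
      rw [← hτ]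
      simp [hp, hε]
    simp only [hq] at hnq
    rw [if_neg (by omega)]
  · have hε1 : ¬ ε ⟨i.val, h⟩ = 1 := by rw [hε]; norm_num
    rw [if_neg hε1]
    have hq' : q (τ ⟨i.val, h⟩) := (hτ _).mp hε
    simp only [hq] at hq'
    rw [if_pos (by omega)]
    exact hσrev i
end
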